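/- arXiv:1804.06396 — 4 statements merged into one kernel-verified Lean document; each statement's English description precedes it below -/
import Mathlib

section
/- Let {·,·,·} be a Jordan triple system on V and define B(X,Y,Z) = {X,Z,Y} + {Z,X,Y}. A subspace I ⊆ V is an ideal of the triple system B if and only if I is an ideal of the triple system {·,·,·}. Consequently B is simple if and only if {·,·,·} is simple. -/
/-- A subspace `I` is an ideal of a triple system `T`. -/
def TripleSystem.IsIdeal {K V : Type*} [Field K] [AddCommGroup V] [Module K V]
    (T : V →ₗ[K] V →ₗ[K] V →ₗ[K] V) (I : Submodule K V) : Prop :=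
  (∀ x ∈ I, ∀ y z : V, T x y z ∈ I) ∧
  (∀ y ∈ I, ∀ x z : V, T x y z ∈ I) ∧
  (∀ z ∈ I, ∀ x y : V, T x y z ∈ I)

/-- A triple system is simple: not identically zero and without proper nontrivial ideals. -/
def TripleSystem.IsSimple {K V : Type*} [Field K] [AddCommGroup V] [Module K V]
    (T : V →ₗ[K] V →ₗ[K] V →ₗ[K] V) : Prop :=
  T ≠ 0 ∧ ∀ I : Submodule K V, TripleSystem.IsIdeal T I → I = ⊥ ∨ I = ⊤

theorem stmt_11 {K V : Type*} [Field K] [CharZero K] [AddCommGroup V] [Module K V]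
    (t : V →ₗ[K] V →ₗ[K] V →ₗ[K] V)
    (houter : ∀ X Y Z, t X Y Z = t Z Y X)
    (hjordan : ∀ X Y U V' Z,
      t X Y (t U V' Z) - t (t X Y U) V' Z - t U V' (t X Y Z) + t U (t Y X V') Z = 0)
    (B : V →ₗ[K] V →ₗ[K] V →ₗ[K] V)
    (hB : ∀ X Y Z, B X Y Z = t X Z Y + t Z X Y) :
    (∀ I : Submodule K V, TripleSystem.IsIdeal B I ↔ TripleSystem.IsIdeal t I) ∧
    (TripleSystem.IsSimple B ↔ TripleSystem.IsSimple t) := by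
  have h2 : (2 : K) ≠ 0 := two_ne_zero
  -- key identity: 2 • t a b c = B a c b + B b a c - B c b a
  have key : ∀ a b c : V, (2 : K) • t a b c = B a c b + B b a c - B c b a := by
    intro a b c
    rw [hB, hB, hB, two_smul, houter b c a, houter c b a, houter c a b]
    abel
  have key' : ∀ a b c : V, t a b c = (2 : K)⁻¹ • (B a c b + B b a c - B c b a) := by
    intro a b c
    rw [← key, inv_smul_smul₀ h2]
  have hideal : ∀ I : Submodule K V, TripleSystem.IsIdeal B I ↔ TripleSystem.IsIdeal t I := by
    intro I
    constructor
    · rintro ⟨h1, h2', h3⟩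
      refine ⟨?_, ?_, ?_⟩
      · intro x hx y z
        rw [key']
        exact I.smul_mem _ (I.sub_mem (I.add_mem (h1 x hx z y) (h2' x hx y z)) (h3 x hx z y))
      · intro y hy x z
        rw [key']
        exact I.smul_mem _ (I.sub_mem (I.add_mem (h3 y hy x z) (h1 y hy x z)) (h2' y hy z x))
      · intro z hz x y
        rw [key']
        exact I.smul_mem _ (I.sub_mem (I.add_mem (h2' z hz x y) (h3 z hz y x)) (h1 z hz y x))
    · rintro ⟨h1, h2', h3⟩
      refine ⟨?_, ?_, ?_⟩
      · intro x hx y z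
        rw [hB]
        exact I.add_mem (h1 x hx z y) (h2' x hx z y)
      · intro y hy x z
        rw [hB]
        exact I.add_mem (h3 y hy x z) (h3 y hy z x)
      · intro z hz x y
        rw [hB]
        exact I.add_mem (h2' z hz x y) (h1 z hz x y)
  refine ⟨hideal, ?_⟩
  have hzero : B = 0 ↔ t = 0 := by
    constructor
    · intro h
      ext a b c
      rw [key', h]
      simp
    · intro h
      ext a b c
      rw [hB, h]
      simp
  constructor
  · rintro ⟨hne, hI⟩
    exact ⟨fun h => hne (hzero.mpr h), fun I hIt => hI I ((hideal I).mpr hIt)⟩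
  · rintro ⟨hne, hI⟩
    exact ⟨fun h => hne (hzero.mp h), fun I hIB => hI I ((hideal I).mp hIB)⟩
end

section
/- Let {·,·,·} be a Jordan triple system (trilinear, with {X,Y,Z} = {Z,Y,X} and the Jordan triple identity {X,Y,{U,V,Z}} = {{X,Y,U},V,Z} + {U,V,{X,Y,Z}} − {U,{Y,X,V},Z}), and define B(X,Y,Z) := {X,Z,Y} + {Z,X,Y}. Then B satisfies the identity I₁(X,Y,Z) := 2B(X,Z,B(X,X,Y)) − 3B(X,Z,B(X,Y,X)) + B(Y,Z,B(X,X,X)) = 0. -/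
theorem stmt_12 {K V : Type*} [Field K] [CharZero K] [AddCommGroup V] [Module K V]
    (t : V →ₗ[K] V →ₗ[K] V →ₗ[K] V)
    (houter : ∀ X Y Z, t X Y Z = t Z Y X)
    (hjordan : ∀ X Y U W Z,
      t X Y (t U W Z) = t (t X Y U) W Z + t U W (t X Y Z) - t U (t Y X W) Z)
    (B : V → V → V → V)
    (hB : ∀ X Y Z, B X Y Z = t X Z Y + t Z X Y) :
    ∀ X Y Z, 2 • B X Z (B X X Y) - 3 • B X Z (B X Y X) + B Y Z (B X X X) = 0 := by
  intro X Y Z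
  have hin : t X (t X X Y) Z = t X (t Y X X) Z := by rw [houter X X Y]
  simp only [hB, map_add, LinearMap.add_apply]
  linear_combination (norm := module)
    (-2 : K) • hjordan X X X Y Z + (2 : K) • hjordan X X Y X Z
    + (-2 : K) • hjordan X Y X X Z + (2 : K) • hjordan Y X X X Z
    + (-4 : K) • hjordan Z X X X Y + (4 : K) • hjordan Z X Y X X
    + (-4 : K) • houter X X (t Z X Y) + (4 : K) • houter X (t X Z X) Y
    + (4 : K) • houter Y X (t Z X X) + (4 : K) • houter Z X (t X X Y)
    + (-4 : K) • houter Z X (t Y X X) + (-4 : K) • hin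
end

section
/- Let {·,·,·} be a Jordan triple system and define B(X,Y,Z) := {X,Z,Y} + {Z,X,Y}. Then B satisfies the identity I₄(X,Y) := B(X,Y,B(Y,Y,Y)) + 2B(Y,Y,B(X,Y,Y)) − B(Y,Y,B(Y,X,Y)) − 2B(Y,B(X,Y,Y),Y) = 0. -/
theorem stmt_13 {K V : Type*} [Field K] [CharZero K] [AddCommGroup V] [Module K V]
    (t : V →ₗ[K] V →ₗ[K] V →ₗ[K] V)
    (houter : ∀ X Y Z, t X Y Z = t Z Y X)
    (hjordan : ∀ X Y U W Z,
      t X Y (t U W Z) = t (t X Y U) W Z + t U W (t X Y Z) - t U (t Y X W) Z)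
    (B : V → V → V → V)
    (hB : ∀ X Y Z, B X Y Z = t X Z Y + t Z X Y) :
    ∀ X Y, B X Y (B Y Y Y) + 2 • B Y Y (B X Y Y)
      - B Y Y (B Y X Y) - 2 • B Y (B X Y Y) Y = 0 := by
  intro X Y
  simp only [hB]
  rw [← houter X Y Y]
  simp only [map_add, LinearMap.add_apply]
  have h1 := hjordan Y Y Y X Y
  have h2 := hjordan X Y Y Y Y
  have h3 := hjordan Y X Y Y Y
  have h4 := hjordan Y Y X Y Y
  rw [← houter X Y Y] at h1 h4
  have o2 := houter (t Y Y Y) X Y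
  have o5 := houter (t X Y Y) Y Y
  have o6 := houter (t Y X Y) Y Y
  linear_combination (norm := module) (-2/3 : K) • h1 + (2 : K) • h2 + (2/3 : K) • h3
    + (2 : K) • h4 + (4/3 : K) • o2 + (4 : K) • o5 + (8/3 : K) • o6
end

section
/- Let {·,·,·} be a Jordan triple system and define B(X,Y,Z) := {X,Z,Y} + {Z,X,Y}. Then B satisfies the seventh-order identity B(X, B(X,Y,X), B(X,X,X)) − B(X, B(X,Y,B(X,X,X)), X) = 0. -/
theorem stmt_14 {K V : Type*} [Field K] [CharZero K] [AddCommGroup V] [Module K V]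
    (t : V →ₗ[K] V →ₗ[K] V →ₗ[K] V)
    (houter : ∀ X Y Z, t X Y Z = t Z Y X)
    (hjordan : ∀ X Y U W Z,
      t X Y (t U W Z) = t (t X Y U) W Z + t U W (t X Y Z) - t U (t Y X W) Z)
    (B : V → V → V → V)
    (hB : ∀ X Y Z, B X Y Z = t X Z Y + t Z X Y) :
    ∀ X Y, B X (B X Y X) (B X X X) - B X (B X Y (B X X X)) X = 0 := by
  intro X Y
  set P := t X X X with hP
  have h0 : t P X X = t X P X := by
    have h := hjordan X X X X X
    rw [← hP] at h
    linear_combination (norm := module) (-1 : K) • h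
  have hM : t X X P = t X P X := (houter X X P).trans h0
  set M := t X P X with hMdef
  have hA := hjordan X P X X Y
  have hB2 := hjordan X X X P Y
  have hC := hjordan P X X X Y
  have hD := hjordan X X P X Y
  rw [h0] at hA hC
  rw [hM, ← hP] at hB2 hD
  rw [← hMdef] at hA hC
  have e3 : (3:K) • (t M X Y - t X M Y) = 0 := by
    linear_combination (norm := module) (-1 : K) • (hA + hB2 + hC + hD)
  have key : t M X Y = t X M Y := by
    rcases smul_eq_zero.mp e3 with h | h
    · exact absurd h (by norm_num)
    · exact sub_eq_zero.mp h
  simp only [hB, map_add, LinearMap.add_apply]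
  rw [← hP]
  linear_combination (norm := module) (-4 : K) • (hB2 + hD) - (4 : K) • key
end
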